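/- arXiv:0807.0706 — 3 statements merged into one kernel-verified Lean document; each statement's English description precedes it below -/
import Mathlib

section
/- Let φ : R → S be a faithfully flat homomorphism of commutative noetherian rings. Then φ is an injective R-module map, and the cokernel S/φ(R) is a flat R-module. -/
/-!
A submodule `M ⊆ N` of a flat module with `M/IM → N/IN` injective for every ideal `I` has a
flat quotient `P = N/M`: an element of `P ⊗ I` killed in `P` lifts to `N ⊗ I`, whose image in `N`
comes from `M`, hence from `M ⊗ I` by the hypothesis on `I`, and flatness of `N` then shows that
the lift comes from `M ⊗ I`. For a faithfully flat `R`-algebra `S`, the maps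
`R/I → S ⊗ R/I` are injective, so this applies to `R ⊆ S`.
-/

universe u

open TensorProduct LinearMap

theorem LinearMap.rTensor_lTensor_comm_apply {R M N P Q : Type*} [CommSemiring R]
    [AddCommMonoid M] [Module R M] [AddCommMonoid N] [Module R N] [AddCommMonoid P] [Module R P]
    [AddCommMonoid Q] [Module R Q] (f : M →ₗ[R] N) (g : P →ₗ[R] Q) (x : M ⊗[R] P) :
    f.rTensor Q (g.lTensor M x) = g.lTensor N (f.rTensor P x) := by
  rw [← comp_apply, rTensor_comp_lTensor, ← lTensor_comp_rTensor, comp_apply]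

theorem Module.Flat.of_exact_of_rTensor_quotient_injective
    {R M N P : Type*} [CommRing R] [AddCommGroup M] [Module R M] [AddCommGroup N] [Module R N]
    [AddCommGroup P] [Module R P] [Module.Flat R N] {f : M →ₗ[R] N} {g : N →ₗ[R] P}
    (hfg : Function.Exact f g) (hg : Function.Surjective g)
    (hf : ∀ I : Ideal R, Function.Injective (f.rTensor (R ⧸ I))) :
    Module.Flat R P := by
  rw [Module.Flat.iff_lTensor_injective']
  intro I
  rw [injective_iff_map_eq_zero]
  intro x hx
  have hrow_I := _root_.rTensor_exact (↥I) hfg hg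
  have hrow_R := _root_.rTensor_exact R hfg hg
  have hcol_M := _root_.lTensor_exact M (exact_subtype_mkQ I) (Submodule.mkQ_surjective I)
  have hcol_N := _root_.lTensor_exact N (exact_subtype_mkQ I) (Submodule.mkQ_surjective I)
  obtain ⟨y, rfl⟩ := rTensor_surjective (↥I) hg x
  obtain ⟨m, hm⟩ : lTensor N I.subtype y ∈ range (rTensor R f) := by
    rw [← hrow_R.linearMap_ker_eq, mem_ker, rTensor_lTensor_comm_apply, hx]
  obtain ⟨z, rfl⟩ : m ∈ range (lTensor M I.subtype) := by
    rw [← hcol_M.linearMap_ker_eq, mem_ker]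
    apply hf I
    rw [map_zero, rTensor_lTensor_comm_apply, hm]
    exact hcol_N.apply_apply_eq_zero y
  have hz : lTensor N I.subtype (rTensor (↥I) f z) = lTensor N I.subtype y := by
    rw [← rTensor_lTensor_comm_apply, hm]
  rw [← Module.Flat.lTensor_preserves_injective_linearMap _ I.injective_subtype hz]
  exact hrow_I.apply_apply_eq_zero z

theorem Module.FaithfullyFlat.rTensor_algebraLinearMap_injective (R S Q : Type*) [CommRing R]
    [CommRing S] [Algebra R S] [Module.FaithfullyFlat R S] [AddCommGroup Q] [Module R Q] :
    Function.Injective ((Algebra.linearMap R S).rTensor Q) := by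
  have : (Algebra.linearMap R S).rTensor Q =
      TensorProduct.mk R S Q 1 ∘ₗ (TensorProduct.lid R Q).toLinearMap := by
    ext; simp
  rw [this, coe_comp, LinearEquiv.coe_coe]
  exact (tensorProduct_mk_injective Q).comp (TensorProduct.lid R Q).injective

theorem injective_and_flat_cokernel_of_faithfullyFlat_general
    (R S : Type u) [CommRing R] [CommRing S]
    [Algebra R S] [Module.FaithfullyFlat R S] :
    Function.Injective (algebraMap R S) ∧
      Module.Flat R (S ⧸ LinearMap.range (Algebra.linearMap R S)) :=
  ⟨FaithfulSMul.algebraMap_injective R S,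
    Module.Flat.of_exact_of_rTensor_quotient_injective (LinearMap.exact_map_mkQ_range _)
      (Submodule.mkQ_surjective _)
      fun I ↦ Module.FaithfullyFlat.rTensor_algebraLinearMap_injective R S (R ⧸ I)⟩

theorem injective_and_flat_cokernel_of_faithfullyFlat
    (R S : Type u) [CommRing R] [CommRing S] [IsNoetherianRing R] [IsNoetherianRing S]
    [Algebra R S] [Module.FaithfullyFlat R S] :
    Function.Injective (algebraMap R S) ∧
      Module.Flat R (S ⧸ LinearMap.range (Algebra.linearMap R S)) :=
  injective_and_flat_cokernel_of_faithfullyFlat_general R S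
end

section
/- Let Q be a nonzero commutative noetherian ring and set R = Q[X]/(X²). Then the cyclic R-module R/(X) is Gorenstein flat but not flat. -/
/-!
Write `x` for the image of `X`, so that `x * r = 0 ↔ x ∣ r` in `R = Q[X]/(X²)`: multiplication
by `x` makes `⋯ → R → R → R → ⋯` an exact complex of free modules whose images are all
`R/(x)`. Tensoring it with a module `N` gives `⋯ → N → N → ⋯`, multiplication by `x` again.
For `N` injective this is exact by Baer's criterion: an element killed by `x` is killed by
`Ann x = (x)`, hence is divisible by `x`. For `N = R/(x)` the maps are zero, so if `R/(x)` were
flat it would vanish, making `x` a unit although `x² = 0`.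
-/

universe u

open CategoryTheory Polynomial

/-- A witness that `G` is a Gorenstein flat `R`-module: an exact complex `F` of flat
`R`-modules (with differentials `d i : F (i+1) →ₗ[R] F i`) such that `E ⊗_R F` is exact
for every injective `R`-module `E`, together with an isomorphism `G ≅ im (F 0 → F (-1))`. -/
structure GorensteinFlatWitness (R : Type u) [CommRing R]
    (G : Type u) [AddCommGroup G] [Module R G] : Type (u + 1) where
  F : ℤ → Type u
  [acg : ∀ i, AddCommGroup (F i)]
  [mod : ∀ i, Module R (F i)]
  flat : ∀ i, Module.Flat R (F i)
  d : ∀ i : ℤ, F (i + 1) →ₗ[R] F i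
  d_comp_d : ∀ i : ℤ, (d i).comp (d (i + 1)) = 0
  exact : ∀ i : ℤ, LinearMap.ker (d i) = LinearMap.range (d (i + 1))
  tensor_exact : ∀ (E : Type u) [AddCommGroup E] [Module R E], Module.Injective R E →
    ∀ i : ℤ, LinearMap.ker (LinearMap.lTensor E (d i)) =
      LinearMap.range (LinearMap.lTensor E (d (i + 1)))
  im_iso : Nonempty (G ≃ₗ[R] LinearMap.range (d (-1)))

/-- `G` is a Gorenstein flat `R`-module. -/
def IsGorensteinFlat (R : Type u) [CommRing R]
    (G : Type u) [AddCommGroup G] [Module R G] : Prop :=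
  Nonempty (GorensteinFlatWitness R G)

/-- The ring of dual numbers `Q[X]/(X²)`. -/
noncomputable abbrev DualNumbersRing (Q : Type u) [CommRing Q] : Type u :=
  Polynomial Q ⧸ (Ideal.span {(X : Polynomial Q) ^ 2})

/-- The image of `X` in `Q[X]/(X²)`. -/
noncomputable def dualX (Q : Type u) [CommRing Q] : DualNumbersRing Q :=
  Ideal.Quotient.mk (Ideal.span {(X : Polynomial Q) ^ 2}) X

open Function LinearMap

section

variable {R : Type u} [CommRing R]

lemma Module.Baer.exists_smul_eq {E : Type*} [AddCommGroup E] [Module R E]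
    (hE : Module.Baer R E) {x : R} {e : E} (he : ∀ r : R, r * x = 0 → r • e = 0) :
    ∃ e', x • e' = e := by
  -- `x * r ↦ r • e` is well defined on the ideal `(x)` by `he`; extend it to `R`, evaluate at `1`.
  let g : Submodule.span R {x} →ₗ[R] E :=
    (Ideal.torsionOf R R x).liftQ (toSpanSingleton R E e) (fun r hr ↦ he r hr) ∘ₗ
      (Ideal.quotTorsionOfEquivSpanSingleton R R x).symm
  obtain ⟨g', hg'⟩ := hE _ g
  refine ⟨g' 1, ?_⟩
  have hgx : g ⟨x, Submodule.mem_span_singleton_self x⟩ = e := by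
    have : (Ideal.quotTorsionOfEquivSpanSingleton R R x).symm
        ⟨x, Submodule.mem_span_singleton_self x⟩ = Submodule.Quotient.mk 1 := by
      rw [LinearEquiv.symm_apply_eq, Ideal.quotTorsionOfEquivSpanSingleton_apply_mk, one_smul]
    simp only [g, LinearMap.coe_comp, LinearEquiv.coe_coe, Function.comp_apply, this]
    exact one_smul R e
  rw [← map_smul, smul_eq_mul, mul_one, hg' x (Submodule.mem_span_singleton_self x), hgx]

lemma exact_lTensor_smul_iff (N : Type*) [AddCommGroup N] [Module R N] (x : R) :
    Exact ((DistribSMul.toLinearMap R R x).lTensor N) ((DistribSMul.toLinearMap R R x).lTensor N) ↔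
      Exact (DistribSMul.toLinearMap R N x) (DistribSMul.toLinearMap R N x) := by
  have hcomm : DistribSMul.toLinearMap R N x ∘ₗ (TensorProduct.rid R N).toLinearMap =
      (TensorProduct.rid R N).toLinearMap ∘ₗ (DistribSMul.toLinearMap R R x).lTensor N := by
    rw [lTensor_smul_action]
    ext
    simp
  exact (Exact.iff_of_ladder_linearEquiv hcomm hcomm).symm

variable {x : R} (hx : Exact (DistribSMul.toLinearMap R R x) (DistribSMul.toLinearMap R R x))
include hx

lemma mul_self_eq_zero_of_exact_smul : x * x = 0 := by
  simpa using (hx x).mpr ⟨1, by simp⟩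

lemma Module.Baer.exact_smul {E : Type*} [AddCommGroup E] [Module R E] (hE : Module.Baer R E) :
    Exact (DistribSMul.toLinearMap R E x) (DistribSMul.toLinearMap R E x) := by
  intro e
  simp only [DistribSMul.toLinearMap_apply, Set.mem_range]
  constructor
  · intro he
    refine hE.exists_smul_eq fun r hr ↦ ?_
    obtain ⟨s, rfl⟩ := (hx r).mp (by simpa [mul_comm] using hr)
    simp [mul_comm x s, mul_smul, he]
  · rintro ⟨e', rfl⟩
    rw [smul_smul, mul_self_eq_zero_of_exact_smul hx, zero_smul]

lemma Ideal.span_singleton_eq_ker_of_exact_smul :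
    Ideal.span {x} = ker (DistribSMul.toLinearMap R R x) := by
  ext r
  rw [hx.linearMap_ker_eq, Ideal.mem_span_singleton', mem_range]
  simp [mul_comm]

lemma isGorensteinFlat_quotient_span_singleton : IsGorensteinFlat R (R ⧸ Ideal.span {x}) :=
  ⟨{ F := fun _ ↦ R
     flat := fun _ ↦ Module.Flat.self
     d := fun _ ↦ DistribSMul.toLinearMap R R x
     d_comp_d := fun _ ↦ hx.linearMap_comp_eq_zero
     exact := fun _ ↦ hx.linearMap_ker_eq
     tensor_exact := fun E _ _ hE _ ↦ ((exact_lTensor_smul_iff E x).mpr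
       ((Module.Baer.of_injective hE).exact_smul hx)).linearMap_ker_eq
     im_iso := ⟨(Submodule.quotEquivOfEq _ _ (Ideal.span_singleton_eq_ker_of_exact_smul hx)).trans
       (DistribSMul.toLinearMap R R x).quotKerEquivRange⟩ }⟩

lemma not_flat_quotient_span_singleton [Nontrivial R] : ¬ Module.Flat R (R ⧸ Ideal.span {x}) := by
  intro hflat
  have hM := (exact_lTensor_smul_iff (R ⧸ Ideal.span {x}) x).mp (Module.Flat.lTensor_exact _ hx)
  have hzero : DistribSMul.toLinearMap R (R ⧸ Ideal.span {x}) x = 0 := by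
    refine LinearMap.ext fun m ↦ Submodule.Quotient.induction_on _ m fun r ↦ ?_
    rw [DistribSMul.toLinearMap_apply, LinearMap.zero_apply, ← Submodule.Quotient.mk_smul,
      Submodule.Quotient.mk_eq_zero, smul_eq_mul, Ideal.mem_span_singleton]
    exact dvd_mul_right x r
  have : Subsingleton (R ⧸ Ideal.span {x}) := by
    refine subsingleton_of_forall_eq 0 fun m ↦ ?_
    obtain ⟨_, hm⟩ := (hM m).mp (by rw [hzero, LinearMap.zero_apply])
    rw [← hm, hzero, LinearMap.zero_apply]
  have hunit : IsUnit x := Ideal.span_singleton_eq_top.mp (Ideal.Quotient.subsingleton_iff.mp this)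
  have hx0 : x = 0 := hunit.mul_left_eq_zero.mp (mul_self_eq_zero_of_exact_smul hx)
  exact not_isUnit_zero (hx0 ▸ hunit)

end

section

variable (Q : Type u) [CommRing Q]

lemma dualX_mul_self : dualX Q * dualX Q = 0 := by
  rw [dualX, ← map_mul, ← sq, Ideal.Quotient.eq_zero_iff_mem]
  exact Ideal.mem_span_singleton_self _

lemma dualX_mul_eq_zero_iff (r : DualNumbersRing Q) : dualX Q * r = 0 ↔ dualX Q ∣ r := by
  refine ⟨fun h ↦ ?_, fun ⟨s, hs⟩ ↦ by rw [hs, ← mul_assoc, dualX_mul_self, zero_mul]⟩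
  obtain ⟨p, rfl⟩ := Ideal.Quotient.mk_surjective r
  rw [dualX, ← map_mul, Ideal.Quotient.eq_zero_iff_mem, Ideal.mem_span_singleton] at h
  obtain ⟨q, hq⟩ := h
  have hp : p = X * q := isRegular_X.left (show X * p = X * (X * q) by rw [hq]; ring)
  exact ⟨Ideal.Quotient.mk _ q, by rw [hp, map_mul, dualX]⟩

lemma exact_smul_dualX :
    Exact (DistribSMul.toLinearMap (DualNumbersRing Q) (DualNumbersRing Q) (dualX Q))
      (DistribSMul.toLinearMap (DualNumbersRing Q) (DualNumbersRing Q) (dualX Q)) := fun r ↦ by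
  simpa [Dvd.dvd, eq_comm] using dualX_mul_eq_zero_iff Q r

instance [Nontrivial Q] : Nontrivial (DualNumbersRing Q) := by
  rw [Ideal.Quotient.nontrivial_iff, Ne, Ideal.span_singleton_eq_top, isUnit_pow_iff two_ne_zero]
  exact not_isUnit_X

end

theorem dualNumbers_mod_X_isGorensteinFlat_not_flat_general
    (Q : Type u) [CommRing Q] [Nontrivial Q] :
    IsGorensteinFlat (DualNumbersRing Q)
        (DualNumbersRing Q ⧸ Ideal.span {dualX Q}) ∧
      ¬ Module.Flat (DualNumbersRing Q)
        (DualNumbersRing Q ⧸ Ideal.span {dualX Q}) :=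
  ⟨isGorensteinFlat_quotient_span_singleton (exact_smul_dualX Q),
    not_flat_quotient_span_singleton (exact_smul_dualX Q)⟩

theorem dualNumbers_mod_X_isGorensteinFlat_not_flat
    (Q : Type u) [CommRing Q] [IsNoetherianRing Q] [Nontrivial Q] :
    IsGorensteinFlat (DualNumbersRing Q)
        (DualNumbersRing Q ⧸ Ideal.span {dualX Q}) ∧
      ¬ Module.Flat (DualNumbersRing Q)
        (DualNumbersRing Q ⧸ Ideal.span {dualX Q}) :=
  dualNumbers_mod_X_isGorensteinFlat_not_flat_general Q
end

section
/- Let (S, 𝔫, l) be a commutative noetherian local ring, let E be the injective hull of the residue field l as an S-module, and let B be an S-module with Hom_S(E, B) ≠ 0. Then 𝔫·Hom_S(E, B) ≠ Hom_S(E, B). -/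
/-!
Every `x` in an essential extension `E` of the residue field is killed by a power of `𝔫`. On the
noetherian cyclic module `S ∙ x`, each `c ∈ 𝔫` has a power `c ^ n` whose kernel and range meet
trivially (Fitting); a nonzero range would contain a nonzero socle element, which `c ^ n` kills,
so `c ^ n • x = 0`, and as `𝔫` is finitely generated some `𝔫 ^ n` kills `x`. Now
`𝔫 · Hom(E, B) = Hom(E, B)` would give `Hom(E, B) = 𝔫 ^ n · Hom(E, B)`, all of whose elements
vanish at `x`; this fails for `x` with `f x ≠ 0`.
-/

universe u

theorem Module.exists_pow_le_annihilator_of_forall_ne_bot {R M : Type*} [CommRing R]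
    [IsNoetherianRing R] [AddCommGroup M] [Module R M] [Module.Finite R M] {I : Ideal R}
    (h : ∀ N : Submodule R M, N ≠ ⊥ → ∃ z ∈ N, z ≠ 0 ∧ ∀ c ∈ I, c • z = 0) :
    ∃ n, I ^ n ≤ Module.annihilator R M := by
  refine Ideal.exists_pow_le_of_le_radical_of_fg (fun c hc => ?_) (IsNoetherian.noetherian I)
  set f := algebraMap R (Module.End R M) c
  obtain ⟨n, hdisj, hn⟩ :=
    (f.eventually_disjoint_ker_pow_range_pow.and (Filter.eventually_ge_atTop 1)).exists
  have hrange : LinearMap.range (f ^ n) = ⊥ := by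
    by_contra hne
    obtain ⟨z, hz, hz0, hcz⟩ := h _ hne
    have hz_ker : z ∈ LinearMap.ker (f ^ n) := by
      obtain ⟨k, rfl⟩ := Nat.exists_eq_add_of_le' hn
      simp [f, ← map_pow, pow_succ, hcz c hc]
    exact hz0 (Submodule.disjoint_def.mp hdisj z hz_ker hz)
  refine ⟨n, Module.mem_annihilator.mpr fun y => ?_⟩
  simpa [f, ← map_pow] using hrange.le (LinearMap.mem_range_self (f ^ n) y)

theorem Submodule.exists_pow_le_annihilator_span_singleton_of_forall_ne_bot {R M : Type*}
    [CommRing R] [IsNoetherianRing R] [AddCommGroup M] [Module R M] {I : Ideal R}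
    (h : ∀ N : Submodule R M, N ≠ ⊥ → ∃ z ∈ N, z ≠ 0 ∧ ∀ c ∈ I, c • z = 0) (x : M) :
    ∃ n, I ^ n ≤ (R ∙ x).annihilator := by
  refine Module.exists_pow_le_annihilator_of_forall_ne_bot fun N hN => ?_
  have hN' : N.map (R ∙ x).subtype ≠ ⊥ := by
    rw [← Submodule.map_bot (R ∙ x).subtype]
    exact (Submodule.map_injective_of_injective (R ∙ x).injective_subtype).ne hN
  obtain ⟨_, ⟨z, hzN, rfl⟩, hz0, hIz⟩ := h _ hN'
  exact ⟨z, hzN, by simpa using hz0, fun c hc => Subtype.ext (hIz c hc)⟩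

theorem IsLocalRing.exists_mem_ne_zero_forall_maximalIdeal_smul_eq_zero {S E : Type*}
    [CommRing S] [IsLocalRing S] [AddCommGroup E] [Module S E] (ι : ResidueField S →ₗ[S] E)
    (hess : ∀ N : Submodule S E, N ≠ ⊥ → LinearMap.range ι ⊓ N ≠ ⊥)
    (N : Submodule S E) (hN : N ≠ ⊥) :
    ∃ z ∈ N, z ≠ 0 ∧ ∀ c ∈ maximalIdeal S, c • z = 0 := by
  obtain ⟨_, hz, hz0⟩ := Submodule.exists_mem_ne_zero_of_ne_bot (hess N hN)
  obtain ⟨⟨t, rfl⟩, hzN⟩ := Submodule.mem_inf.mp hz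
  refine ⟨ι t, hzN, hz0, fun c hc => ?_⟩
  rw [← map_smul, Algebra.smul_def, ResidueField.algebraMap_eq, (residue_eq_zero_iff c).mpr hc,
    zero_mul, map_zero]

theorem Submodule.pow_smul_eq_self {R M : Type*} [CommSemiring R] [AddCommMonoid M] [Module R M]
    {I : Ideal R} {N : Submodule R M} (h : I • N = N) : ∀ n : ℕ, I ^ n • N = N
  | 0 => by rw [pow_zero, Ideal.one_eq_top, top_smul]
  | n + 1 => by rw [pow_succ', ← Ideal.smul_eq_mul, smul_assoc, pow_smul_eq_self h n, h]

theorem LinearMap.smul_top_le_ker_applyₗ {R M B : Type*} [CommRing R] [AddCommGroup M]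
    [Module R M] [AddCommGroup B] [Module R B] {I : Ideal R} {x : M}
    (hx : I ≤ (R ∙ x).annihilator) :
    I • (⊤ : Submodule R (M →ₗ[R] B)) ≤ ker (applyₗ x) :=
  Submodule.smul_le.mpr fun c hc f _ => by
    simp [← map_smul, (Submodule.mem_annihilator_span_singleton x c).mp (hx hc)]

theorem maximalIdeal_smul_hom_ne_top_general
    (S : Type u) [CommRing S] [IsNoetherianRing S] [IsLocalRing S]
    (E : Type u) [AddCommGroup E] [Module S E]
    (ι : IsLocalRing.ResidueField S →ₗ[S] E)
    (hess : ∀ N : Submodule S E, N ≠ ⊥ → LinearMap.range ι ⊓ N ≠ ⊥)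
    (B : Type u) [AddCommGroup B] [Module S B]
    (hB : ∃ f : E →ₗ[S] B, f ≠ 0) :
    (IsLocalRing.maximalIdeal S) • (⊤ : Submodule S (E →ₗ[S] B)) ≠ ⊤ := by
  obtain ⟨f, hf⟩ := hB
  obtain ⟨x, hfx⟩ : ∃ x, f x ≠ 0 := by
    by_contra! h
    exact hf (LinearMap.ext h)
  obtain ⟨n, hn⟩ := Submodule.exists_pow_le_annihilator_span_singleton_of_forall_ne_bot
    (IsLocalRing.exists_mem_ne_zero_forall_maximalIdeal_smul_eq_zero ι hess) x
  intro htop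
  have hf_mem : f ∈ IsLocalRing.maximalIdeal S ^ n • (⊤ : Submodule S (E →ₗ[S] B)) := by
    rw [Submodule.pow_smul_eq_self htop n]
    trivial
  exact hfx (LinearMap.smul_top_le_ker_applyₗ hn hf_mem)

theorem maximalIdeal_smul_hom_ne_top
    (S : Type u) [CommRing S] [IsNoetherianRing S] [IsLocalRing S]
    (E : Type u) [AddCommGroup E] [Module S E] (hE : Module.Injective S E)
    (ι : IsLocalRing.ResidueField S →ₗ[S] E) (hι : Function.Injective ι)
    (hess : ∀ N : Submodule S E, N ≠ ⊥ → LinearMap.range ι ⊓ N ≠ ⊥)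
    (B : Type u) [AddCommGroup B] [Module S B]
    (hB : ∃ f : E →ₗ[S] B, f ≠ 0) :
    (IsLocalRing.maximalIdeal S) • (⊤ : Submodule S (E →ₗ[S] B)) ≠ ⊤ :=
  maximalIdeal_smul_hom_ne_top_general S E ι hess B hB
end
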